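/- Let z₁, z₂ ∈ ℂ \ ℝ with z₁ ≠ z₂, and let m₁ = m(z₁), m₂ = m(z₂) be the corresponding values of the Stieltjes transform of the semicircle law. Then m₁ m₂ ≠ 1 and (m₁ - m₂)/(z₁ - z₂) = m₁ m₂ / (1 - m₁ m₂). -/

import Mathlib

open MeasureTheory

/-- The Stieltjes transform of the semicircle law,
`m(z) = ∫_{-2}^{2} √(4-x²)/(2π (x - z)) dx`. -/
noncomputable def mSC (z : ℂ) : ℂ :=
  ∫ x in (-2 : ℝ)..2, (Real.sqrt (4 - x ^ 2) / (2 * Real.pi) : ℂ) / ((x : ℂ) - z)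

namespace MSCaux

open Complex Set Metric intervalIntegral Real

noncomputable def h (z : ℂ) (θ : ℝ) : ℂ :=
  2 * (Real.sin θ : ℂ) ^ 2 / ((Real.pi : ℂ) * (2 * (Real.cos θ : ℂ) - z))

lemma pi_ne : (Real.pi : ℂ) ≠ 0 := by exact_mod_cast Real.pi_ne_zero

lemma sub_real_ne (z : ℂ) (hz : z.im ≠ 0) (c : ℂ) (hc : c.im = 0) : c - z ≠ 0 := by
  intro h
  apply hz
  have := congrArg Complex.im h
  simp [hc] at this
  linarith

lemma denom_ne (z : ℂ) (hz : z.im ≠ 0) (x : ℝ) : (x : ℂ) - z ≠ 0 :=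
  sub_real_ne z hz _ (by simp)

lemma h_denom_ne (z : ℂ) (hz : z.im ≠ 0) (θ : ℝ) :
    (Real.pi : ℂ) * (2 * (Real.cos θ : ℂ) - z) ≠ 0 :=
  mul_ne_zero pi_ne (sub_real_ne z hz _ (by simp))

lemma h_cont (z : ℂ) (hz : z.im ≠ 0) : Continuous (h z) := by
  apply Continuous.div
  · fun_prop
  · fun_prop
  · exact fun θ => h_denom_ne z hz θ

lemma stepA (z : ℂ) (hz : z.im ≠ 0) : mSC z = ∫ θ in (0:ℝ)..Real.pi, h z θ := by
  set g : ℝ → ℂ := fun x => (Real.sqrt (4 - x ^ 2) / (2 * Real.pi) : ℂ) / ((x : ℂ) - z) with hg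
  have hgc : Continuous g := by
    apply Continuous.div
    · fun_prop
    · fun_prop
    · exact fun x => denom_ne z hz x
  have h1 : ∀ θ ∈ uIcc (0:ℝ) Real.pi, HasDerivAt (fun t => 2 * Real.cos t) (-2 * Real.sin θ) θ := by
    intro θ _
    have := (Real.hasDerivAt_cos θ).const_mul 2
    simpa [mul_comm] using this
  have key := intervalIntegral.integral_comp_smul_deriv h1
    (Continuous.continuousOn (by fun_prop)) hgc
  have key2 : (∫ θ in (0:ℝ)..Real.pi, (-2 * Real.sin θ) • g (2 * Real.cos θ))
      = ∫ x in (2:ℝ)..(-2:ℝ), g x := by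
    simpa using key
  have e1 : mSC z = -∫ x in (2:ℝ)..(-2:ℝ), g x := by
    rw [mSC, ← intervalIntegral.integral_symm]
  rw [e1, ← key2, ← intervalIntegral.integral_neg]
  apply intervalIntegral.integral_congr
  intro θ hθ
  rw [uIcc_of_le Real.pi_pos.le] at hθ
  have hs : 0 ≤ Real.sin θ := Real.sin_nonneg_of_nonneg_of_le_pi hθ.1 hθ.2
  have hsq : 4 - (2 * Real.cos θ) ^ 2 = (2 * Real.sin θ) ^ 2 := by
    nlinarith [Real.sin_sq_add_cos_sq θ]
  have hsqrt : Real.sqrt (4 - (2 * Real.cos θ) ^ 2) = 2 * Real.sin θ := by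
    rw [hsq, Real.sqrt_sq (by linarith)]
  show -((-2 * Real.sin θ) • g (2 * Real.cos θ)) = h z θ
  rw [hg]
  simp only [hsqrt]
  rw [h, Complex.real_smul]
  have hd : (↑(2 * Real.cos θ) : ℂ) - z ≠ 0 := denom_ne z hz _
  have hd2 := h_denom_ne z hz θ
  push_cast at hd hd2 ⊢
  rw [eq_div_iff hd2]
  have hd3 : (↑Real.pi * Complex.cos ↑θ * 4 - ↑Real.pi * z * 2) ≠ 0 := fun hh => hd2 (by linear_combination hh / 2)
  have hx : (↑Real.pi * Complex.cos ↑θ * 4 - ↑Real.pi * z * 2)⁻¹ * (↑Real.pi * Complex.cos ↑θ * 4 - ↑Real.pi * z * 2) = 1 := inv_mul_cancel₀ hd3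
  field_simp

lemma stepB (z : ℂ) (hz : z.im ≠ 0) :
    (∫ θ in (0:ℝ)..(2 * Real.pi), h z θ) = 2 * ∫ θ in (0:ℝ)..Real.pi, h z θ := by
  have hc := h_cont z hz
  have hsym : ∀ θ : ℝ, h z (2 * Real.pi - θ) = h z θ := by
    intro θ
    unfold h
    rw [Real.sin_sub, Real.cos_sub, Real.sin_two_pi, Real.cos_two_pi]
    push_cast
    ring_nf
  have e1 : (∫ x in (0:ℝ)..Real.pi, h z (2 * Real.pi - x))
      = ∫ x in (2 * Real.pi - Real.pi)..(2 * Real.pi - 0), h z x :=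
    intervalIntegral.integral_comp_sub_left (h z) (2 * Real.pi)
  simp only [hsym] at e1
  have e1' : (∫ x in (0:ℝ)..Real.pi, h z x) = ∫ x in Real.pi..(2 * Real.pi), h z x := by
    rw [e1]; congr 1 <;> ring
  have := intervalIntegral.integral_add_adjacent_intervals
    (a := (0:ℝ)) (b := Real.pi) (c := 2 * Real.pi) (μ := volume)
    (hc.intervalIntegrable _ _) (hc.intervalIntegrable _ _)
  rw [← this, ← e1']
  ring

lemma alg_aux (p w d s2 : ℂ) (hp : p ≠ 0) (hw0 : w ≠ 0) (hd : d ≠ 0) :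
    2 * s2 / (p * d) = (w * I) * (I / (2 * p) * (-(4 * s2 * w ^ 2) / (w ^ 2 * (w * d)))) := by
  field_simp
  ring_nf
  linear_combination (s2 * 4) * Complex.I_sq

lemma stepC (z : ℂ) (hz : z.im ≠ 0) :
    (∫ θ in (0:ℝ)..(2 * Real.pi), h z θ)
      = ∮ w in C(0, 1), (I / (2 * (Real.pi : ℂ))) *
          ((w ^ 2 - 1) ^ 2 / (w ^ 2 * (w ^ 2 - z * w + 1))) := by
  rw [circleIntegral]
  apply intervalIntegral.integral_congr
  intro θ _
  simp only [deriv_circleMap]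
  have hmap : circleMap 0 1 θ = Complex.exp (θ * I) := by simp [circleMap]
  set c : ℂ := (Real.cos θ : ℂ) with hcdef
  set s : ℂ := (Real.sin θ : ℂ) with hsdef
  have hw : circleMap 0 1 θ = c + s * I := by
    rw [hmap, Complex.exp_mul_I]
    simp [hcdef, hsdef]
  have hcs : s ^ 2 + c ^ 2 = 1 := by
    rw [hcdef, hsdef]
    exact_mod_cast Real.sin_sq_add_cos_sq θ
  have hw0 : c + s * I ≠ 0 := by
    rw [← hw]; exact circleMap_ne_center one_ne_zero
  have hd : 2 * c - z ≠ 0 := sub_real_ne z hz _ (by simp [hcdef])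
  have hfac : (c + s * I) ^ 2 - z * (c + s * I) + 1 = (c + s * I) * (2 * c - z) := by
    linear_combination s ^ 2 * Complex.I_sq - hcs
  have hq : (c + s * I) ^ 2 - z * (c + s * I) + 1 ≠ 0 := by
    rw [hfac]; exact mul_ne_zero hw0 hd
  have hfac2 : (c + s * I) ^ 2 - 1 = 2 * s * I * (c + s * I) := by
    linear_combination (-(s ^ 2)) * Complex.I_sq + hcs
  show h z θ = (circleMap 0 1 θ * I) • ((I / (2 * (Real.pi : ℂ))) *
      ((circleMap 0 1 θ ^ 2 - 1) ^ 2 / (circleMap 0 1 θ ^ 2 * (circleMap 0 1 θ ^ 2 - z * circleMap 0 1 θ + 1))))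
  rw [hw, smul_eq_mul, hfac, hfac2]
  set w : ℂ := c + s * I with hwdef
  have hsq : (2 * s * I * w) ^ 2 = -(4 * s ^ 2 * w ^ 2) := by
    linear_combination 4 * s ^ 2 * w ^ 2 * Complex.I_sq
  rw [hsq]
  unfold h
  rw [← hcdef, ← hsdef]
  exact alg_aux _ _ _ _ pi_ne hw0 hd

lemma my_circleIntegral_add {f g : ℂ → ℂ} {c : ℂ} {R : ℝ} (hf : CircleIntegrable f c R)
    (hg : CircleIntegrable g c R) :
    (∮ z in C(c, R), (f z + g z)) = (∮ z in C(c, R), f z) + ∮ z in C(c, R), g z := by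
  simp only [circleIntegral, smul_add, intervalIntegral.integral_add hf.out hg.out]

lemma circle_eval (z m μ : ℂ) (hm0 : m ≠ 0) (hmμ : m * μ = 1) (hsum : m + μ = z)
    (habs : ‖m‖ < 1) (habsμ : 1 < ‖μ‖) :
    (∮ w in C(0, 1), (I / (2 * (Real.pi : ℂ)) *
      ((w ^ 2 - 1) ^ 2 / (w ^ 2 * (w ^ 2 - z * w + 1))))) = -2 * m := by
  rw [circleIntegral.integral_const_mul]
  -- membership facts
  have hsph : ∀ w : ℂ, w ∈ sphere (0:ℂ) (1:ℝ) → ‖w‖ = 1 := by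
    intro w hw; simpa using mem_sphere_zero_iff_norm.mp hw
  have hw0 : ∀ w ∈ sphere (0:ℂ) (1:ℝ), w - 0 ≠ 0 := by
    intro w hw h
    rw [sub_zero] at h; rw [h] at hw
    have := hsph 0 hw; simp at this
  have hwm : ∀ w ∈ sphere (0:ℂ) (1:ℝ), w - m ≠ 0 := by
    intro w hw h
    rw [sub_eq_zero] at h
    rw [← h, hsph w hw] at habs; exact lt_irrefl _ habs
  have hwμ : ∀ w ∈ sphere (0:ℂ) (1:ℝ), w - μ ≠ 0 := by
    intro w hw h
    rw [sub_eq_zero] at h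
    rw [← h, hsph w hw] at habsμ; exact lt_irrefl _ habsμ
  -- integrability of the pieces
  have cont_inv : ∀ a : ℂ, (∀ w ∈ sphere (0:ℂ) (1:ℝ), w - a ≠ 0) →
      ContinuousOn (fun w : ℂ => (w - a)⁻¹) (sphere (0:ℂ) (1:ℝ)) := fun a ha =>
    (continuousOn_id.sub continuousOn_const).inv₀ ha
  have i1 : CircleIntegrable (fun _ : ℂ => (1:ℂ)) 0 1 := circleIntegrable_const 1 0 1
  have i2 : CircleIntegrable (fun w : ℂ => z * (w - 0)⁻¹) 0 1 :=
    (continuousOn_const.mul (cont_inv 0 hw0)).circleIntegrable zero_le_one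
  have i3 : CircleIntegrable (fun w : ℂ => ((w - 0) ^ (-2 : ℤ))) 0 1 :=
    (((continuousOn_id.sub continuousOn_const).zpow₀ _ fun w hw =>
      Or.inl (hw0 w hw)).circleIntegrable zero_le_one)
  have i4 : CircleIntegrable (fun w : ℂ => (m - μ) * (w - m)⁻¹) 0 1 :=
    (continuousOn_const.mul (cont_inv m hwm)).circleIntegrable zero_le_one
  have i5 : CircleIntegrable (fun w : ℂ => (μ - m) * (w - μ)⁻¹) 0 1 :=
    (continuousOn_const.mul (cont_inv μ hwμ)).circleIntegrable zero_le_one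
  -- the partial fraction decomposition, valid on the unit circle
  have hEq : EqOn (fun w : ℂ => (w ^ 2 - 1) ^ 2 / (w ^ 2 * (w ^ 2 - z * w + 1)))
      (fun w : ℂ => 1 + z * (w - 0)⁻¹ + ((w - 0) ^ (-2 : ℤ)) + (m - μ) * (w - m)⁻¹
        + (μ - m) * (w - μ)⁻¹) (sphere (0:ℂ) (1:ℝ)) := by
    intro w hw
    have h1 : w ≠ 0 := by have := hw0 w hw; rwa [sub_zero] at this
    have h2 : w - m ≠ 0 := hwm w hw
    have h3 : w - μ ≠ 0 := hwμ w hw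
    have hq : w ^ 2 - z * w + 1 = (w - m) * (w - μ) := by
      linear_combination w * hsum - hmμ
    simp only
    rw [hq, sub_zero, zpow_neg]
    rw [show ((w:ℂ) ^ (2:ℤ)) = w ^ (2:ℕ) from zpow_two w ▸ (sq w).symm ▸ rfl]
    have hD : w ^ 2 * ((w - m) * (w - μ)) ≠ 0 :=
      mul_ne_zero (pow_ne_zero 2 h1) (mul_ne_zero h2 h3)
    rw [div_eq_iff hD]
    field_simp [h1, h2, h3]
    linear_combination (w ^ 3 - (m + μ) * w ^ 2 + w + ((-1) * w * m * μ + w ^ 2 * μ + w ^ 2 * m + (-1) * w ^ 3 + w ^ 4 * m ^ 2 * μ ^ 2 + (-2) * w ^ 5 * m * μ ^ 2 + (-2) * w ^ 5 * m ^ 2 * μ + w ^ 6 * μ ^ 2 + 4 * w ^ 6 * m * μ + w ^ 6 * m ^ 2 + (-2) * w ^ 7 * μ + (-2) * w ^ 7 * m + w ^ 8)) * hsum + (3 * w ^ 2 - z * w - 1 + (1 + w * μ + w * m + (-3) * w ^ 2 + (-1) * w ^ 3 * m * μ + w ^ 4 * μ + w ^ 4 * m + (-1) * w ^ 4 * m *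 μ ^ 2 + (-1) * w ^ 4 * m ^ 2 * μ + (-1) * w ^ 5 + w ^ 5 * μ ^ 2 + 5 * w ^ 5 * m * μ + w ^ 5 * m ^ 2 + (-4) * w ^ 6 * μ + (-4) * w ^ 6 * m + 3 * w ^ 7)) * hmμ + (-((-1*w^1*m^1*μ^1) + (1*w^2*m^1) + (1*w^2*μ^1) + (-1*w^3) + (1*w^4*m^2*μ^2) + (-2*w^5*m^1*μ^2) + (-2*w^5*m^2*μ^1) + (4*w^6*m^1*μ^1) + (1*w^6*m^2) + (1*w^6*μ^2) + (-2*w^7*m^1) + (-2*w^7*μ^1) + (1*w^8))) * hsum + ((-1*w^1*m^1) + (-1*w^1*μ^1) + (3*w^2) + (-1*w^4*m^1) + (1*w^4*m^2*μ^1) + (-1*w^4*μ^1) + (1*w^4*m^1*μ^2) + (1*w^5) + (-5*w^5*m^1*μ^1) + (-1*w^5*μ^2) + (-1*w^5*m^2) + (4*w^6*m^1) + (4*w^6*μ^1) + (-3*w^7) + (1*w^3*m^1*μ^1) + (-1)) * hmμ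
  rw [circleIntegral.integral_congr zero_le_one hEq]
  have i12 : CircleIntegrable (fun w : ℂ => 1 + z * (w - 0)⁻¹) 0 1 := i1.add i2
  have i123 : CircleIntegrable (fun w : ℂ => 1 + z * (w - 0)⁻¹ + (w - 0) ^ (-2 : ℤ)) 0 1 :=
    i12.add i3
  have i1234 : CircleIntegrable
      (fun w : ℂ => 1 + z * (w - 0)⁻¹ + (w - 0) ^ (-2 : ℤ) + (m - μ) * (w - m)⁻¹) 0 1 :=
    i123.add i4
  have s5 : (∮ w in C(0, 1), (1 + z * (w - 0)⁻¹ + (w - 0) ^ (-2 : ℤ) + (m - μ) * (w - m)⁻¹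
        + (μ - m) * (w - μ)⁻¹))
      = (∮ w in C(0, 1), (1 + z * (w - 0)⁻¹ + (w - 0) ^ (-2 : ℤ) + (m - μ) * (w - m)⁻¹))
        + ∮ w in C(0, 1), (μ - m) * (w - μ)⁻¹ :=
    my_circleIntegral_add i1234 i5
  have s4 : (∮ w in C(0, 1), (1 + z * (w - 0)⁻¹ + (w - 0) ^ (-2 : ℤ) + (m - μ) * (w - m)⁻¹))
      = (∮ w in C(0, 1), (1 + z * (w - 0)⁻¹ + (w - 0) ^ (-2 : ℤ)))
        + ∮ w in C(0, 1), (m - μ) * (w - m)⁻¹ :=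
    my_circleIntegral_add i123 i4
  have s3 : (∮ w in C(0, 1), (1 + z * (w - 0)⁻¹ + (w - 0) ^ (-2 : ℤ)))
      = (∮ w in C(0, 1), (1 + z * (w - 0)⁻¹)) + ∮ w in C(0, 1), (w - 0) ^ (-2 : ℤ) :=
    my_circleIntegral_add i12 i3
  have s2 : (∮ w in C(0, 1), (1 + z * (w - 0)⁻¹))
      = (∮ _ in C(0, 1), (1:ℂ)) + ∮ w in C(0, 1), z * (w - 0)⁻¹ :=
    my_circleIntegral_add i1 i2
  rw [s5, s4, s3, s2]
  -- evaluate each piece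
  have v1 : (∮ _ in C(0, 1), (1:ℂ)) = 0 := by
    have := circleIntegral.integral_sub_zpow_of_ne (by decide : (0:ℤ) ≠ -1) 0 0 1
    simpa using this
  have v2 : (∮ w in C(0, 1), z * (w - 0)⁻¹) = z * (2 * Real.pi * I) := by
    rw [circleIntegral.integral_const_mul,
      circleIntegral.integral_sub_inv_of_mem_ball (by simp : (0:ℂ) ∈ ball (0:ℂ) 1)]
  have v3 : (∮ w in C(0, 1), (w - 0) ^ (-2 : ℤ)) = 0 :=
    circleIntegral.integral_sub_zpow_of_ne (by decide) 0 0 1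
  have v4 : (∮ w in C(0, 1), (m - μ) * (w - m)⁻¹) = (m - μ) * (2 * Real.pi * I) := by
    rw [circleIntegral.integral_const_mul,
      circleIntegral.integral_sub_inv_of_mem_ball
        (by rwa [mem_ball_zero_iff] : m ∈ ball (0:ℂ) 1)]
  have v5 : (∮ w in C(0, 1), (μ - m) * (w - μ)⁻¹) = 0 := by
    rw [circleIntegral.integral_const_mul]
    have : (∮ w in C(0, 1), (w - μ)⁻¹) = 0 := by
      apply circleIntegral_eq_zero_of_differentiable_on_off_countable zero_le_one
        countable_empty
      · apply (continuousOn_id.sub continuousOn_const).inv₀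
        intro w hw h
        simp only [Pi.sub_apply] at h
        rw [sub_eq_zero] at h
        simp only [id_eq] at h
        have : ‖w‖ ≤ 1 := by
          simpa using mem_closedBall_zero_iff.mp hw
        rw [h] at this; linarith
      · intro w hw
        apply DifferentiableAt.inv (differentiableAt_id.sub_const μ)
        intro h
        rw [sub_eq_zero] at h
        simp only [id_eq] at h
        have : ‖w‖ < 1 := by
          simpa using mem_ball_zero_iff.mp hw.1
        rw [h] at this; linarith
    rw [this, mul_zero]
  rw [v1, v2, v3, v4, v5]
  have hI := Complex.I_sq
  field_simp [pi_ne]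
  linear_combination (2 * (Real.pi:ℂ) * (z + m - μ)) * hI + (2 * (Real.pi:ℂ)) * hsum

lemma abs_ne_one (z r q : ℂ) (hz : z.im ≠ 0) (h1 : r * q = 1) (h2 : r + q = z) :
    ‖r‖ ≠ 1 := by
  intro habs
  have hr0 : r ≠ 0 := by
    intro h; rw [h, zero_mul] at h1; exact one_ne_zero h1.symm
  have hrc : r * (starRingEnd ℂ) r = 1 := by
    rw [Complex.mul_conj]
    norm_cast
    rw [Complex.normSq_eq_norm_sq, habs]; norm_num
  have hq : q = (starRingEnd ℂ) r := mul_left_cancel₀ hr0 (h1.trans hrc.symm)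
  apply hz
  rw [← h2, Complex.add_im, hq, Complex.conj_im]
  ring

lemma exists_root (z : ℂ) (hz : z.im ≠ 0) :
    ∃ m μ : ℂ, m * μ = 1 ∧ m + μ = z ∧ ‖m‖ < 1 ∧ 1 < ‖μ‖ := by
  obtain ⟨s, hs⟩ := IsAlgClosed.exists_eq_mul_self (z ^ 2 - 4)
  set r₁ := (z + s) / 2 with hr₁
  set r₂ := (z - s) / 2 with hr₂
  have hprod : r₁ * r₂ = 1 := by
    rw [hr₁, hr₂]
    field_simp
    linear_combination hs
  have hsum : r₁ + r₂ = z := by rw [hr₁, hr₂]; ring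
  have habs1 : ‖r₁‖ ≠ 1 := abs_ne_one z r₁ r₂ hz hprod hsum
  have habs2 : ‖r₂‖ ≠ 1 := by
    apply abs_ne_one z r₂ r₁ hz _ (by rw [← hsum]; ring)
    rw [← hprod]; ring
  have habsprod : ‖r₁‖ * ‖r₂‖ = 1 := by
    rw [← norm_mul, hprod, norm_one]
  have h1nn : 0 ≤ ‖r₁‖ := norm_nonneg r₁
  have h2nn : 0 ≤ ‖r₂‖ := norm_nonneg r₂
  rcases lt_or_gt_of_ne habs1 with h | h
  · exact ⟨r₁, r₂, hprod, hsum, h, by nlinarith⟩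
  · refine ⟨r₂, r₁, by rw [← hprod]; ring, by rw [← hsum]; ring, by nlinarith, h⟩

lemma quadratic (z : ℂ) (hz : z.im ≠ 0) : mSC z ^ 2 + z * mSC z + 1 = 0 := by
  obtain ⟨m, μ, hmμ, hsum, habs, habsμ⟩ := exists_root z hz
  have hm0 : m ≠ 0 := by
    intro h; rw [h, zero_mul] at hmμ; exact one_ne_zero hmμ.symm
  have hval : mSC z = -m := by
    rw [stepA z hz]
    have h4 : (2:ℂ) * ∫ θ in (0:ℝ)..Real.pi, h z θ = 2 * (-m) := by
      rw [← stepB z hz, stepC z hz]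
      rw [circle_eval z m μ hm0 hmμ hsum habs habsμ]
      ring
    exact mul_left_cancel₀ (two_ne_zero) h4
  rw [hval]
  linear_combination m * hsum - hmμ

lemma mSC_ne_zero (z : ℂ) (hz : z.im ≠ 0) : mSC z ≠ 0 := by
  intro h
  have := quadratic z hz
  rw [h] at this
  simp at this

end MSCaux

/-- For distinct non-real `z₁, z₂`, with `mᵢ = m(zᵢ)`,
one has `m₁ m₂ ≠ 1` and `(m₁ - m₂)/(z₁ - z₂) = m₁ m₂/(1 - m₁ m₂)`. -/
theorem mSC_divided_difference (z₁ z₂ : ℂ) (hz₁ : z₁.im ≠ 0) (hz₂ : z₂.im ≠ 0)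
    (hne : z₁ ≠ z₂) :
    mSC z₁ * mSC z₂ ≠ 1 ∧
    (mSC z₁ - mSC z₂) / (z₁ - z₂) = mSC z₁ * mSC z₂ / (1 - mSC z₁ * mSC z₂) := by
  have q1 := MSCaux.quadratic z₁ hz₁
  have q2 := MSCaux.quadratic z₂ hz₂
  have hprod_ne : mSC z₁ * mSC z₂ ≠ 1 := by
    intro h
    apply hne
    linear_combination mSC z₂ * q1 - mSC z₁ * q2
      - (mSC z₁ - mSC z₂) * h - (z₁ - z₂) * h
  refine ⟨hprod_ne, ?_⟩
  have hzne : z₁ - z₂ ≠ 0 := sub_ne_zero.2 hne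
  have hdne : 1 - mSC z₁ * mSC z₂ ≠ 0 := sub_ne_zero.2 fun h => hprod_ne h.symm
  rw [div_eq_div_iff hzne hdne]
  linear_combination mSC z₁ * q2 - mSC z₂ * q1
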